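/- Separability criterion from a universal uncertainty relation: Let Ω be a convex, Schur-concave function on probability vectors, and suppose the uncertainty relation ∑_{i=1}^m Ω(p_{x_i}(η)) ≥ Ω(ω_x) holds for all states η on H_A. If ρ = ∑_λ t_λ η_λ ⊗ σ_λ is a separable state (t_λ ≥ 0, ∑ t_λ = 1), then ∑_{i=1}^m Ω(p_{x_i ⊗ y_i}(ρ)) ≥ Ω(ω_x), where p_{x_i ⊗ y_i}(ρ) is the joint outcome distribution of the product measurement x_i ⊗ y_i on ρ. -/

import Mathlib

open Finset Kronecker ComplexOrder

/-- Non-increasing rearrangement of `p`. -/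
noncomputable def sortDesc {n : ℕ} (p : Fin n → ℝ) : Fin n → ℝ :=
  fun i => p (Tuple.sort p i.rev)

/-- Sum of the `k` largest entries of `p`. -/
noncomputable def partialSum {n : ℕ} (p : Fin n → ℝ) (k : ℕ) : ℝ :=
  ∑ i ∈ Finset.univ.filter (fun i : Fin n => (i : ℕ) < k), sortDesc p i

/-- `p ⪯ q`: `p` is majorized by `q`. -/
noncomputable def MajorizedBy {n : ℕ} (p q : Fin n → ℝ) : Prop :=
  (∀ k : ℕ, partialSum p k ≤ partialSum q k) ∧ (∑ i, p i = ∑ i, q i)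

def IsProbVec {n : ℕ} (p : Fin n → ℝ) : Prop :=
  (∀ i, 0 ≤ p i) ∧ ∑ i, p i = 1

/-- Tensor (Kronecker) product of vectors. -/
def tensorVec {d e : ℕ} (p : Fin d → ℝ) (q : Fin e → ℝ) : Fin (d * e) → ℝ :=
  fun k => p (finProdFinEquiv.symm k).1 * q (finProdFinEquiv.symm k).2

/-- Pad a vector with trailing zeros. -/
def padVec {d m : ℕ} (p : Fin d → ℝ) : Fin m → ℝ :=
  fun i => if h : (i : ℕ) < d then p ⟨i, h⟩ else 0

def DoublyStochastic {ι : Type*} [Fintype ι] (M : Matrix ι ι ℝ) : Prop :=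
  (∀ i j, 0 ≤ M i j) ∧ (∀ i, ∑ j, M i j = 1) ∧ (∀ j, ∑ i, M i j = 1)

def IsDensityMatrix {ι : Type*} [Fintype ι] [DecidableEq ι] (ρ : Matrix ι ι ℂ) : Prop :=
  ρ.PosSemidef ∧ ρ.trace = 1

def IsPOVM {ι : Type*} [Fintype ι] [DecidableEq ι] {d : ℕ} (F : Fin d → Matrix ι ι ℂ) : Prop :=
  (∀ a, (F a).PosSemidef) ∧ ∑ a, F a = 1

/-- Outcome distribution of POVM `F` on state `ρ`. -/
noncomputable def outDist {ι : Type*} [Fintype ι] [DecidableEq ι] {d : ℕ}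
    (F : Fin d → Matrix ι ι ℂ) (ρ : Matrix ι ι ℂ) : Fin d → ℝ :=
  fun a => (Matrix.trace (F a * ρ)).re

/-!
On a product state `η ⊗ σ` the product measurement `x ⊗ y` has outcome distribution `p ⊗ q`
with `p = p_x(η)`, `q = p_y(σ)`. Any `k` entries of `p ⊗ q` lie in `A × [e]`, where `A` is the
set of their first indices and `#A ≤ k`, so they sum to at most `∑_{a ∈ A} p a`: hence
`p ⊗ q ⪯ p` (padded with zeros), and Schur-concavity gives `Ω(p ⊗ q) ≥ Ω(p)`. Applying the
uncertainty relation to each `η_λ`, averaging with the weights `t_λ`, and using that mixing does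
not decrease `Ω` yields the bound for `ρ = ∑ t_λ η_λ ⊗ σ_λ`.
-/

lemma Fin.val_le_of_strictMono {k : ℕ} {v : Fin k → ℕ} (hv : StrictMono v) :
    ∀ j : Fin k, (j : ℕ) ≤ v j
  | ⟨0, _⟩ => Nat.zero_le _
  | ⟨i + 1, h⟩ =>
    (Fin.val_le_of_strictMono hv ⟨i, by omega⟩).trans_lt (hv (Fin.mk_lt_mk.2 i.lt_succ_self))

lemma sum_filter_val_lt_eq_sum_castLE {M : Type*} [AddCommMonoid M] {n k : ℕ} (hk : k ≤ n)
    (g : Fin n → M) :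
    ∑ i ∈ univ.filter (fun i : Fin n => (i : ℕ) < k), g i =
      ∑ j : Fin k, g (Fin.castLE hk j) := by
  refine Eq.trans ?_ (Finset.sum_map univ (Fin.castLEEmb hk) g)
  congr 1
  ext i
  simp only [mem_filter, mem_univ, true_and, mem_map, Fin.castLEEmb_apply]
  exact ⟨fun hi => ⟨⟨i, hi⟩, rfl⟩, by rintro ⟨j, rfl⟩; exact j.2⟩

lemma Antitone.sum_le_sum_filter_val_lt_card {M : Type*} [AddCommMonoid M] [PartialOrder M]
    [IsOrderedAddMonoid M] {n : ℕ} {g : Fin n → M} (hg : Antitone g)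
    (S : Finset (Fin n)) :
    ∑ i ∈ S, g i ≤ ∑ i ∈ univ.filter (fun i : Fin n => (i : ℕ) < #S), g i := by
  have hS : #S ≤ n := (card_le_univ S).trans_eq (Fintype.card_fin n)
  rw [sum_filter_val_lt_eq_sum_castLE hS, ← S.sum_coe_sort,
    ← (S.orderIsoOfFin rfl).toEquiv.sum_comp]
  refine sum_le_sum fun j _ => hg ?_
  exact Fin.val_le_of_strictMono (v := fun j => (S.orderEmbOfFin rfl j : ℕ))
    (fun _ _ h => (S.orderEmbOfFin rfl).strictMono h) j

section Majorization

variable {n : ℕ}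

lemma antitone_sortDesc (p : Fin n → ℝ) : Antitone (sortDesc p) :=
  fun _ _ hab => Tuple.monotone_sort p (Fin.rev_le_rev.mpr hab)

lemma sum_le_partialSum_card (p : Fin n → ℝ) (S : Finset (Fin n)) :
    ∑ i ∈ S, p i ≤ partialSum p #S := by
  set φ := Fin.revPerm.trans (Tuple.sort p)
  have hS : ∑ i ∈ S, p i = ∑ j ∈ S.map φ.symm.toEmbedding, sortDesc p j := by
    simp [sortDesc, φ]
  rw [hS, ← card_map φ.symm.toEmbedding]
  exact (antitone_sortDesc p).sum_le_sum_filter_val_lt_card _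

lemma exists_card_le_partialSum_eq_sum (p : Fin n → ℝ) (k : ℕ) :
    ∃ T : Finset (Fin n), #T ≤ k ∧ partialSum p k = ∑ i ∈ T, p i := by
  set φ := Fin.revPerm.trans (Tuple.sort p)
  refine ⟨(univ.filter (fun i : Fin n => (i : ℕ) < k)).map φ.toEmbedding, ?_, by
    rw [sum_map]; rfl⟩
  rw [card_map]
  calc #(univ.filter (fun i : Fin n => (i : ℕ) < k))
      ≤ #(range k) :=
        card_le_card_of_injOn Fin.val (fun i hi => by simpa using hi) Fin.val_injective.injOn
    _ = k := card_range k

lemma partialSum_mono {p : Fin n → ℝ} (hp : ∀ i, 0 ≤ p i) : Monotone (partialSum p) :=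
  fun _ _ hjk => sum_le_sum_of_subset_of_nonneg
    (fun i => by simp only [mem_filter, mem_univ, true_and]; omega) (fun i _ _ => hp _)

lemma majorizedBy_of_sum_le_partialSum {p q : Fin n → ℝ} (hq : ∀ i, 0 ≤ q i)
    (h : ∀ S : Finset (Fin n), ∑ i ∈ S, p i ≤ partialSum q #S)
    (hsum : ∑ i, p i = ∑ i, q i) :
    MajorizedBy p q := by
  refine ⟨fun k => ?_, hsum⟩
  obtain ⟨T, hTk, hT⟩ := exists_card_le_partialSum_eq_sum p k
  rw [hT]
  exact (h T).trans (partialSum_mono hq hTk)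

end Majorization

section PadTensor

variable {d e m : ℕ}

lemma padVec_nonneg {p : Fin d → ℝ} (hp : ∀ i, 0 ≤ p i) (i : Fin m) :
    0 ≤ (padVec p : Fin m → ℝ) i := by
  unfold padVec; split <;> simp [hp]

lemma sum_map_castLEEmb_padVec (h : d ≤ m) (p : Fin d → ℝ) (A : Finset (Fin d)) :
    ∑ i ∈ A.map (Fin.castLEEmb h), (padVec p : Fin m → ℝ) i = ∑ a ∈ A, p a := by
  simp [padVec]

lemma sum_padVec (h : d ≤ m) (p : Fin d → ℝ) :
    ∑ i, (padVec p : Fin m → ℝ) i = ∑ a, p a := by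
  rw [← sum_map_castLEEmb_padVec h p univ]
  refine (sum_subset (subset_univ _) fun i _ hi => ?_).symm
  have hid : ¬ (i : ℕ) < d := fun hid => hi (mem_map.2 ⟨⟨i, hid⟩, mem_univ _, rfl⟩)
  simp [padVec, hid]

lemma sum_le_partialSum_padVec (h : d ≤ m) {p : Fin d → ℝ} (hp : ∀ i, 0 ≤ p i)
    (A : Finset (Fin d)) {k : ℕ} (hk : #A ≤ k) :
    ∑ a ∈ A, p a ≤ partialSum (padVec p : Fin m → ℝ) k := by
  rw [← sum_map_castLEEmb_padVec h]
  refine (sum_le_partialSum_card _ _).trans (partialSum_mono (padVec_nonneg hp) ?_)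
  rwa [card_map]

lemma sum_tensorVec (p : Fin d → ℝ) (q : Fin e → ℝ) :
    ∑ k, tensorVec p q k = (∑ a, p a) * ∑ b, q b := by
  rw [sum_mul_sum, ← Fintype.sum_prod_type', ← finProdFinEquiv.symm.sum_comp]
  rfl

lemma sum_tensorVec_le {p : Fin d → ℝ} {q : Fin e → ℝ} (hp : ∀ i, 0 ≤ p i)
    (hq : IsProbVec q) (T : Finset (Fin (d * e))) :
    ∑ k ∈ T, tensorVec p q k ≤
      ∑ a ∈ T.image (fun k => (finProdFinEquiv.symm k).1), p a := by
  set A := T.image (fun k => (finProdFinEquiv.symm k).1)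
  have hT : T.map finProdFinEquiv.symm.toEmbedding ⊆ A ×ˢ univ := fun x hx => by
    obtain ⟨k, hk, rfl⟩ := mem_map.1 hx
    exact mem_product.2 ⟨mem_image_of_mem _ hk, mem_univ _⟩
  calc ∑ k ∈ T, tensorVec p q k
      = ∑ x ∈ T.map finProdFinEquiv.symm.toEmbedding, p x.1 * q x.2 := by rw [sum_map]; rfl
    _ ≤ ∑ x ∈ A ×ˢ univ, p x.1 * q x.2 :=
        sum_le_sum_of_subset_of_nonneg hT fun x _ _ => mul_nonneg (hp _) (hq.1 _)
    _ = ∑ a ∈ A, p a := by simp only [sum_product, ← mul_sum, hq.2, mul_one]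

lemma tensorVec_majorizedBy_padVec {p : Fin d → ℝ} {q : Fin e → ℝ} (hp : ∀ i, 0 ≤ p i)
    (hq : IsProbVec q) : MajorizedBy (tensorVec p q) (padVec p) := by
  have he : 0 < e := Nat.pos_of_ne_zero (by rintro rfl; simpa using hq.2)
  have hde : d ≤ d * e := Nat.le_mul_of_pos_right d he
  refine majorizedBy_of_sum_le_partialSum (padVec_nonneg hp) (fun T => ?_) ?_
  · exact (sum_tensorVec_le hp hq T).trans (sum_le_partialSum_padVec hde hp _ card_image_le)
  · rw [sum_tensorVec, hq.2, mul_one, sum_padVec hde]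

end PadTensor

section Quantum

variable {ι κ : Type*} [Fintype ι] [Fintype κ]

lemma trace_mul_nonneg_of_posSemidef {A B : Matrix ι ι ℂ} (hA : A.PosSemidef)
    (hB : B.PosSemidef) : 0 ≤ (A * B).trace := by
  classical
  obtain ⟨C, rfl⟩ : ∃ C : Matrix ι ι ℂ, A = C.conjTranspose * C := by
    open scoped MatrixOrder in
    exact CStarAlgebra.nonneg_iff_eq_star_mul_self.mp hA.nonneg
  rw [Matrix.mul_assoc, Matrix.trace_mul_comm]
  exact (hB.mul_mul_conjTranspose_same C).trace_nonneg

lemma outDist_isProbVec [DecidableEq ι] {d : ℕ} {F : Fin d → Matrix ι ι ℂ}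
    {ρ : Matrix ι ι ℂ} (hF : IsPOVM F) (hρ : IsDensityMatrix ρ) :
    IsProbVec (outDist F ρ) := by
  refine ⟨fun a => (Complex.nonneg_iff.1 (trace_mul_nonneg_of_posSemidef (hF.1 a) hρ.1)).1, ?_⟩
  simp only [outDist, ← Complex.re_sum, ← Matrix.trace_sum, ← Matrix.sum_mul, hF.2, one_mul,
    hρ.2, Complex.one_re]

lemma re_trace_kronecker_mul_kronecker {A B : Matrix ι ι ℂ} {C D : Matrix κ κ ℂ}
    (hA : A.PosSemidef) (hB : B.PosSemidef) :
    ((A ⊗ₖ C) * (B ⊗ₖ D)).trace.re = (A * B).trace.re * (C * D).trace.re := by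
  have hAB := Complex.nonneg_iff.1 (trace_mul_nonneg_of_posSemidef hA hB)
  rw [← Matrix.mul_kronecker_mul, Matrix.trace_kronecker, Complex.mul_re, ← hAB.2, zero_mul,
    sub_zero]

lemma outDist_kronecker_of_separable [DecidableEq ι] [DecidableEq κ] {d e L : ℕ}
    {F : Fin d → Matrix ι ι ℂ} (hF : ∀ a, (F a).PosSemidef) (G : Fin e → Matrix κ κ ℂ)
    (t : Fin L → ℝ) {η : Fin L → Matrix ι ι ℂ} (hη : ∀ l, (η l).PosSemidef)
    (σ : Fin L → Matrix κ κ ℂ) :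
    outDist (fun k => F (finProdFinEquiv.symm k).1 ⊗ₖ G (finProdFinEquiv.symm k).2)
        (∑ l, t l • (η l ⊗ₖ σ l)) =
      fun k => ∑ l, t l * tensorVec (outDist F (η l)) (outDist G (σ l)) k := by
  funext k
  simp only [outDist, Matrix.mul_sum, Matrix.trace_sum, Complex.re_sum, Matrix.mul_smul,
    Matrix.trace_smul, Complex.smul_re, smul_eq_mul, tensorVec]
  refine sum_congr rfl fun l _ => ?_
  rw [re_trace_kronecker_mul_kronecker (hF _) (hη l)]

end Quantum

section Uncertainty

variable {d : ℕ} (Omega : (n : ℕ) → (Fin n → ℝ) → ℝ)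

lemma le_omega_tensorVec
    (hschur : ∀ (n : ℕ) (p q : Fin n → ℝ), MajorizedBy p q → Omega n q ≤ Omega n p)
    (hpad : ∀ p : Fin d → ℝ, Omega (d * d) (padVec p) = Omega d p)
    {p q : Fin d → ℝ} (hp : ∀ i, 0 ≤ p i) (hq : IsProbVec q) :
    Omega d p ≤ Omega (d * d) (tensorVec p q) :=
  hpad p ▸ hschur _ _ _ (tensorVec_majorizedBy_padVec hp hq)

lemma sum_mul_le_omega_sum_mul_tensorVec
    (hschur : ∀ (n : ℕ) (p q : Fin n → ℝ), MajorizedBy p q → Omega n q ≤ Omega n p)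
    (hmix : ∀ (n M : ℕ) (t : Fin M → ℝ) (v : Fin M → Fin n → ℝ),
      (∀ l, 0 ≤ t l) → (∑ l, t l = 1) →
      ∑ l, t l * Omega n (v l) ≤ Omega n (fun j => ∑ l, t l * v l j))
    (hpad : ∀ p : Fin d → ℝ, Omega (d * d) (padVec p) = Omega d p)
    {L : ℕ} {t : Fin L → ℝ} (ht : ∀ l, 0 ≤ t l) (ht1 : ∑ l, t l = 1)
    {p q : Fin L → Fin d → ℝ} (hp : ∀ l i, 0 ≤ p l i) (hq : ∀ l, IsProbVec (q l)) :
    ∑ l, t l * Omega d (p l) ≤ Omega (d * d) (fun k => ∑ l, t l * tensorVec (p l) (q l) k) :=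
  calc ∑ l, t l * Omega d (p l)
      ≤ ∑ l, t l * Omega (d * d) (tensorVec (p l) (q l)) := sum_le_sum fun l _ =>
        mul_le_mul_of_nonneg_left (le_omega_tensorVec Omega hschur hpad (hp l) (hq l)) (ht l)
    _ ≤ _ := hmix _ _ t _ ht ht1

end Uncertainty

/-- separability criterion from a universal uncertainty relation. -/
theorem entanglement_criterion_universal_UR {dA dB d m N L : ℕ}
    (Omega : (n : ℕ) → (Fin n → ℝ) → ℝ)
    -- Schur-concavity of the uncertainty quantifier
    (hschur : ∀ (n : ℕ) (p q : Fin n → ℝ), MajorizedBy p q → Omega n q ≤ Omega n p)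
    -- probabilistic mixing does not decrease uncertainty (convexity, as in the paper)
    (hmix : ∀ (n M : ℕ) (t : Fin M → ℝ) (v : Fin M → Fin n → ℝ),
      (∀ l, 0 ≤ t l) → (∑ l, t l = 1) →
      ∑ l, t l * Omega n (v l) ≤ Omega n (fun j => ∑ l, t l * v l j))
    -- the quantifier is insensitive to padding with trailing zeros
    (hpad : ∀ p : Fin d → ℝ, Omega (d * d) (padVec p) = Omega d p)
    -- Alice's and Bob's measurements
    (F : Fin m → Fin d → Matrix (Fin dA) (Fin dA) ℂ)
    (G : Fin m → Fin d → Matrix (Fin dB) (Fin dB) ℂ)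
    (hF : ∀ i, IsPOVM (F i)) (hG : ∀ i, IsPOVM (G i))
    -- the universal uncertainty relation for Alice's measurements
    (ω : Fin N → ℝ)
    (hUR : ∀ η : Matrix (Fin dA) (Fin dA) ℂ, IsDensityMatrix η →
      Omega N ω ≤ ∑ i, Omega d (outDist (F i) η))
    -- a separable state
    (t : Fin L → ℝ) (ht : ∀ l, 0 ≤ t l) (ht1 : ∑ l, t l = 1)
    (η : Fin L → Matrix (Fin dA) (Fin dA) ℂ) (hη : ∀ l, IsDensityMatrix (η l))
    (σ : Fin L → Matrix (Fin dB) (Fin dB) ℂ) (hσ : ∀ l, IsDensityMatrix (σ l))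
    (ρ : Matrix (Fin dA × Fin dB) (Fin dA × Fin dB) ℂ)
    (hρ : ρ = ∑ l, t l • (η l ⊗ₖ σ l)) :
    Omega N ω ≤ ∑ i, Omega (d * d) (fun k =>
      (Matrix.trace
        ((F i (finProdFinEquiv.symm k).1 ⊗ₖ G i (finProdFinEquiv.symm k).2) * ρ)).re) := by
  subst hρ
  calc Omega N ω = ∑ l, t l * Omega N ω := by rw [← sum_mul, ht1, one_mul]
    _ ≤ ∑ l, t l * ∑ i, Omega d (outDist (F i) (η l)) :=
        sum_le_sum fun l _ => mul_le_mul_of_nonneg_left (hUR (η l) (hη l)) (ht l)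
    _ = ∑ i, ∑ l, t l * Omega d (outDist (F i) (η l)) := by simp_rw [mul_sum]; exact sum_comm
    _ ≤ _ := sum_le_sum fun i _ => by
        change _ ≤ Omega (d * d) (outDist (fun k => _ ⊗ₖ _) _)
        rw [outDist_kronecker_of_separable (hF i).1 (G i) t (fun l => (hη l).1) σ]
        exact sum_mul_le_omega_sum_mul_tensorVec Omega hschur hmix hpad ht ht1
          (fun l => (outDist_isProbVec (hF i) (hη l)).1) fun l => outDist_isProbVec (hG i) (hσ l)
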